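/- arXiv:2406.00064 — 11 statements merged into one kernel-verified Lean document; each statement's English description precedes it below -/
import Mathlib

section
/- If s is a positive even integer, then arctan(β^s) = (1/2)·arctan(2/(√5·F_s)), where β = (1-√5)/2. -/
open Real MeasureTheory intervalIntegral

noncomputable def phi : ℝ := (1 + Real.sqrt 5) / 2
noncomputable def psi : ℝ := (1 - Real.sqrt 5) / 2
noncomputable def fibR (n : ℤ) : ℝ := (phi ^ n - psi ^ n) / Real.sqrt 5
noncomputable def lucR (n : ℤ) : ℝ := phi ^ n + psi ^ n

theorem stmt5 (s : ℤ) (hs : 0 < s) (he : Even s) :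
    Real.arctan (psi ^ s) = (1 / 2) * Real.arctan (2 / (Real.sqrt 5 * fibR s)) := by
  have h5 : Real.sqrt 5 ^ 2 = 5 := Real.sq_sqrt (by norm_num)
  have h5lt : Real.sqrt 5 < 3 := by nlinarith [Real.sqrt_nonneg 5]
  have h5gt : (2:ℝ) < Real.sqrt 5 := by nlinarith [Real.sqrt_nonneg 5]
  have h5pos : (0:ℝ) < Real.sqrt 5 := by linarith
  have hψneg : psi < 0 := by unfold psi; linarith
  have hψgt : -1 < psi := by unfold psi; linarith
  have hψne : psi ≠ 0 := ne_of_lt hψneg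
  set t : ℝ := psi ^ s with ht
  -- t > 0
  obtain ⟨k, hk⟩ := he
  have htpos : 0 < t := by
    rw [ht, hk, zpow_add₀ hψne, ← sq]
    positivity
  -- t < 1
  have habs : |psi| < 1 := abs_lt.mpr ⟨hψgt, hψneg.trans one_pos⟩
  have hn : s = (s.toNat : ℤ) := (Int.toNat_of_nonneg hs.le).symm
  have htlt : t < 1 := by
    rw [ht, hn, zpow_natCast]
    calc psi ^ s.toNat ≤ |psi ^ s.toNat| := le_abs_self _
    _ = |psi| ^ s.toNat := abs_pow _ _
    _ < 1 := pow_lt_one₀ (abs_nonneg _) habs (by omega)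
  -- phi^s = t⁻¹
  have hmul : phi * psi = -1 := by unfold phi psi; nlinarith
  have hφs : phi ^ s = t⁻¹ := by
    have h1 : phi ^ s * psi ^ s = 1 := by
      rw [← mul_zpow, hmul]
      exact Even.neg_one_zpow ⟨k, hk⟩
    field_simp [ht]
    linarith [h1]
  -- rewrite the argument
  have hden : 1 - t * t > 0 := by nlinarith
  have harg : 2 / (Real.sqrt 5 * fibR s) = (t + t) / (1 - t * t) := by
    unfold fibR
    rw [hφs, ← ht]
    have : Real.sqrt 5 * ((t⁻¹ - t) / Real.sqrt 5) = t⁻¹ - t := by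
      field_simp
    rw [this]
    field_simp
    ring
  rw [harg, ← Real.arctan_add (by nlinarith)]
  ring
end

section
/- If s is a positive odd integer, then arctan(-β^s) = (1/2)·arctan(2/L_s), where β = (1-√5)/2. -/
open Real MeasureTheory intervalIntegral

lemma sqrt5_lt : 2 < Real.sqrt 5 ∧ Real.sqrt 5 < 3 := by
  constructor
  · have : (2:ℝ) = Real.sqrt 4 := by rw [show (4:ℝ) = 2^2 by norm_num, Real.sqrt_sq]; norm_num
    rw [this]; exact Real.sqrt_lt_sqrt (by norm_num) (by norm_num)
  · have : (3:ℝ) = Real.sqrt 9 := by rw [show (9:ℝ) = 3^2 by norm_num, Real.sqrt_sq]; norm_num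
    rw [this]; exact Real.sqrt_lt_sqrt (by norm_num) (by norm_num)

theorem stmt6 (s : ℤ) (hs : 0 < s) (ho : Odd s) :
    Real.arctan (-psi ^ s) = (1 / 2) * Real.arctan (2 / lucR s) := by
  obtain ⟨h2, h3⟩ := sqrt5_lt
  have hpsi1 : -1 < psi := by unfold psi; linarith
  have hpsi0 : psi < 0 := by unfold psi; linarith
  have hphi1 : 1 < phi := by unfold phi; linarith
  set t : ℝ := -psi ^ s with ht
  have hns : -psi ^ s = (-psi) ^ s := (Odd.neg_zpow ho psi).symm
  have ht0 : 0 < t := by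
    rw [ht, hns]; exact zpow_pos (by linarith) s
  have ht1 : t < 1 := by
    rw [ht, hns]
    exact zpow_lt_one₀ (by linarith) (by linarith) hs
  have hphis : 1 < phi ^ s := one_lt_zpow₀ hphi1 hs
  have hprod : phi ^ s * psi ^ s = -1 := by
    rw [← mul_zpow]
    have : phi * psi = -1 := by
      unfold phi psi
      have : Real.sqrt 5 ^ 2 = 5 := Real.sq_sqrt (by norm_num)
      nlinarith
    rw [this, Odd.neg_one_zpow ho]
  have hL : lucR s = phi ^ s + psi ^ s := rfl
  have hLpos : 0 < lucR s := by rw [hL]; have := ht0; rw [ht] at this; linarith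
  have hkey : 2 * t / (1 - t ^ 2) = 2 / lucR s := by
    have h1t : 1 - t ^ 2 ≠ 0 := by nlinarith
    field_simp
    rw [hL]
    have : t ^ 2 = psi ^ s * psi ^ s := by rw [ht]; ring
    nlinarith
  have := Real.two_mul_arctan (by linarith : -1 < t) ht1
  rw [hkey] at this
  rw [← this]; ring
end

section
/- For all positive integers n and k, F_{kn}/F_k = (n/2^n) · ∫_{-1}^{1} (L_k + F_k·x·√5)^{n-1} dx. -/
open Real MeasureTheory intervalIntegral

lemma integ_aux (a b : ℝ) (ha : a ≠ 0) (n : ℕ) (hn : 0 < n) :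
    ∫ x in (-1:ℝ)..1, (b + a * x) ^ (n - 1) = ((b + a) ^ n - (b - a) ^ n) / (n * a) := by
  have h : ∀ x : ℝ, (b + a * x) ^ (n - 1) = (fun u : ℝ => u ^ (n - 1)) (a * x + b) := by
    intro x; ring_nf
  rw [intervalIntegral.integral_congr (g := fun x => (fun u : ℝ => u ^ (n - 1)) (a * x + b))
    (fun x _ => h x)]
  rw [intervalIntegral.integral_comp_mul_add (fun u : ℝ => u ^ (n - 1)) ha b,
    integral_pow]
  have hn1 : n - 1 + 1 = n := Nat.succ_pred_eq_of_pos hn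
  rw [hn1]
  have hnn : (n : ℝ) ≠ 0 := Nat.cast_ne_zero.mpr hn.ne'
  have : ((n - 1 : ℕ) : ℝ) + 1 = (n : ℝ) := by
    have := hn1; push_cast [Nat.cast_sub hn]; ring
  rw [this]
  rw [smul_eq_mul]
  field_simp
  ring

lemma sqrt5_pos : (0:ℝ) < Real.sqrt 5 := Real.sqrt_pos.mpr (by norm_num)

lemma fibR_pos (k : ℕ) (hk : 0 < k) : 0 < fibR k := by
  have h5 : (1:ℝ) < Real.sqrt 5 := by
    have : (1:ℝ) = Real.sqrt 1 := (Real.sqrt_one).symm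
    rw [this]; exact Real.sqrt_lt_sqrt (by norm_num) (by norm_num)
  have hphi : (1:ℝ) < phi := by unfold phi; linarith
  have hpsi : |psi| < 1 := by
    unfold psi
    rw [abs_lt]
    constructor <;> nlinarith [Real.sq_sqrt (by norm_num : (5:ℝ) ≥ 0), sqrt5_pos]
  have h1 : phi ^ (k:ℤ) = phi ^ k := zpow_natCast _ _
  have h2 : psi ^ (k:ℤ) = psi ^ k := zpow_natCast _ _
  have hφk : 1 < phi ^ k := one_lt_pow₀ hphi hk.ne'
  have hψk : psi ^ k ≤ 1 := by
    calc psi ^ k ≤ |psi ^ k| := le_abs_self _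
    _ = |psi| ^ k := abs_pow _ _
    _ ≤ 1 := pow_le_one₀ (abs_nonneg _) hpsi.le
  unfold fibR
  rw [h1, h2]
  exact div_pos (by linarith) sqrt5_pos

theorem stmt7 (n k : ℕ) (hn : 0 < n) (hk : 0 < k) :
    fibR (k * n) / fibR k =
      (n / 2 ^ n) * ∫ x in (-1 : ℝ)..1, (lucR k + fibR k * x * Real.sqrt 5) ^ (n - 1) := by
  have h5 := sqrt5_pos
  have hF := fibR_pos k hk
  set a : ℝ := fibR k * Real.sqrt 5 with ha_def
  have ha : a ≠ 0 := (mul_pos hF h5).ne'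
  have hcong : ∀ x : ℝ, (lucR k + fibR k * x * Real.sqrt 5) ^ (n-1)
      = (lucR k + a * x) ^ (n-1) := by intro x; rw [ha_def]; ring
  rw [intervalIntegral.integral_congr (g := fun x => (lucR k + a * x) ^ (n-1))
    (fun x _ => hcong x), integ_aux a (lucR k) ha n hn]
  have hfa : a = phi ^ (k:ℤ) - psi ^ (k:ℤ) := by
    rw [ha_def]; unfold fibR; field_simp
  have hp : lucR k + a = 2 * phi ^ (k:ℤ) := by rw [hfa]; unfold lucR; ring
  have hm : lucR k - a = 2 * psi ^ (k:ℤ) := by rw [hfa]; unfold lucR; ring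
  rw [hp, hm]
  have hkn : fibR (k * n) = (( phi ^ (k:ℤ))^n - (psi ^ (k:ℤ))^n) / Real.sqrt 5 := by
    unfold fibR
    rw [← zpow_natCast (phi ^ (k:ℤ)) n, ← zpow_natCast (psi ^ (k:ℤ)) n,
      ← zpow_mul, ← zpow_mul]
  rw [hkn, ha_def]
  have hnn : (n : ℝ) ≠ 0 := Nat.cast_ne_zero.mpr hn.ne'
  have h2n : (2:ℝ) ^ n ≠ 0 := by positivity
  rw [mul_pow, mul_pow]
  field_simp
end

section
/- For every positive integer n, F_{2n} = (n/2)·(3/2)^{n-1} · ∫_0^π (1 + (√5/3)·cos x)^{n-1}·sin x dx. -/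
open Real MeasureTheory intervalIntegral

theorem stmt8 (n : ℕ) (hn : 0 < n) :
    fibR (2 * n) =
      (n / 2) * (3 / 2 : ℝ) ^ (n - 1) *
        ∫ x in (0 : ℝ)..Real.pi, (1 + Real.sqrt 5 / 3 * Real.cos x) ^ (n - 1) * Real.sin x := by
  obtain ⟨m, rfl⟩ := Nat.exists_eq_succ_of_ne_zero hn.ne'
  set s : ℝ := Real.sqrt 5 with hsdef
  have hs : s ^ 2 = 5 := Real.sq_sqrt (by norm_num)
  have hspos : 0 < s := Real.sqrt_pos.mpr (by norm_num)
  set a : ℝ := s / 3 with ha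
  have hane : a ≠ 0 := by positivity
  have hm1 : ((m : ℝ) + 1) ≠ 0 := by positivity
  have hderiv : ∀ x ∈ Set.uIcc (0:ℝ) Real.pi,
      HasDerivAt (fun x => -(1 + a * Real.cos x) ^ (m + 1) / (a * (m + 1)))
        ((1 + a * Real.cos x) ^ m * Real.sin x) x := by
    intro x _
    have h1 : HasDerivAt (fun x => 1 + a * Real.cos x) (a * (-Real.sin x)) x :=
      ((Real.hasDerivAt_cos x).const_mul a).const_add 1
    have h2 := (h1.pow (m + 1)).neg.div_const (a * (m + 1))
    refine h2.congr_deriv ?_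
    push_cast
    field_simp
  have hcont : IntervalIntegrable
      (fun x => (1 + a * Real.cos x) ^ m * Real.sin x) volume 0 Real.pi :=
    (Continuous.mul (by continuity) Real.continuous_sin).intervalIntegrable _ _
  have hint : (∫ x in (0:ℝ)..Real.pi, (1 + a * Real.cos x) ^ m * Real.sin x)
      = ((1 + a) ^ (m + 1) - (1 - a) ^ (m + 1)) / (a * (m + 1)) := by
    rw [intervalIntegral.integral_eq_sub_of_hasDerivAt hderiv hcont]
    simp [Real.cos_pi]
    ring
  have hconv : (fun x => (1 + s / 3 * Real.cos x) ^ (m + 1 - 1) * Real.sin x)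
      = fun x => (1 + a * Real.cos x) ^ m * Real.sin x := by
    funext x; simp [ha]
  rw [show (m + 1 - 1) = m from rfl] at *
  rw [hconv] at *
  rw [hint]
  -- now pure algebra
  have hphi2 : phi ^ 2 = (3 + s) / 2 := by
    simp only [phi]
    field_simp
    nlinarith [hs]
  have hpsi2 : psi ^ 2 = (3 - s) / 2 := by
    simp only [psi]
    field_simp
    nlinarith [hs]
  have hz : fibR (2 * (m + 1 : ℕ)) = ((phi ^ 2) ^ (m + 1) - (psi ^ 2) ^ (m + 1)) / s := by
    have : (2 * ((m : ℤ) + 1)) = ((2 * (m + 1) : ℕ) : ℤ) := by push_cast; ring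
    simp only [fibR, hsdef]
    push_cast
    rw [this, zpow_natCast, zpow_natCast, pow_mul, pow_mul]
  rw [show ((2 : ℤ) * ((m : ℕ) + 1 : ℕ)) = (2 * ((m + 1 : ℕ) : ℤ)) by push_cast; ring] at *
  push_cast at hz ⊢
  rw [hz, hphi2, hpsi2, ha]
  have h2 : ((3 + s) / 2) ^ (m + 1) = (3 + s) ^ (m + 1) / 2 ^ (m + 1) := div_pow _ _ _
  have h3 : ((3 - s) / 2) ^ (m + 1) = (3 - s) ^ (m + 1) / 2 ^ (m + 1) := div_pow _ _ _
  have h4 : (1 + s / 3) ^ (m + 1) = (3 + s) ^ (m + 1) / 3 ^ (m + 1) := by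
    rw [show (1 + s / 3) = (3 + s) / 3 by ring, div_pow]
  have h5 : (1 - s / 3) ^ (m + 1) = (3 - s) ^ (m + 1) / 3 ^ (m + 1) := by
    rw [show (1 - s / 3) = (3 - s) / 3 by ring, div_pow]
  have h6 : ((3 : ℝ) / 2) ^ m = 3 ^ m / 2 ^ m := div_pow _ _ _
  rw [h2, h3, h4, h5, h6]
  field_simp
  ring
end

section
/- For all integers n ≥ 2 and k ≥ 1, ∫_{-1}^{1} (L_k + F_k·x·√5)^{n-2}·(F_k·√5 + L_k·x) dx = (2^n/((n-1)·√5)) · ( L_{kn}/F_k − F_{kn}·L_k/(n·F_k²) ). -/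
open Real MeasureTheory intervalIntegral

lemma key_int (a b : ℝ) (hb : b ≠ 0) (m : ℕ) :
    ∫ x in (-1:ℝ)..1, (a + b*x)^m * (b + a*x)
      = (a/(((m:ℝ)+2)*b^2)) * ((a+b)^(m+2) - (a-b)^(m+2))
        + ((b^2-a^2)/(((m:ℝ)+1)*b^2)) * ((a+b)^(m+1) - (a-b)^(m+1)) := by
  have h := intervalIntegral.integral_eq_sub_of_hasDerivAt
    (f := fun x => (a/(((m:ℝ)+2)*b^2)) * (a+b*x)^(m+2)
        + ((b^2-a^2)/(((m:ℝ)+1)*b^2)) * (a+b*x)^(m+1))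
    (f' := fun x => (a + b*x)^m * (b + a*x))
    (a := (-1:ℝ)) (b := 1) ?_ ?_
  · rw [h]; ring_nf
  · intro x _
    have h1 : HasDerivAt (fun x : ℝ => a + b*x) b x := by
      simpa using ((hasDerivAt_id x).const_mul b).const_add a
    have h2 := ((h1.pow (m+2)).const_mul (a/(((m:ℝ)+2)*b^2))).add
      ((h1.pow (m+1)).const_mul ((b^2-a^2)/(((m:ℝ)+1)*b^2)))
    convert h2 using 1
    · rfl
    simp only [Nat.add_sub_cancel]
    push_cast
    have hm2 : ((m:ℝ)+2) ≠ 0 := by positivity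
    have hm1 : ((m:ℝ)+1) ≠ 0 := by positivity
    field_simp
    ring
  · apply Continuous.intervalIntegrable
    continuity

set_option maxHeartbeats 1000000 in
theorem stmt9 (n k : ℤ) (hn : 2 ≤ n) (hk : 1 ≤ k) :
    ∫ x in (-1 : ℝ)..1,
        (lucR k + fibR k * x * Real.sqrt 5) ^ (n - 2) * (fibR k * Real.sqrt 5 + lucR k * x) =
      (2 : ℝ) ^ n / (((n : ℝ) - 1) * Real.sqrt 5) *
        (lucR (k * n) / fibR k - fibR (k * n) * lucR k / ((n : ℝ) * fibR k ^ 2)) := by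
  obtain ⟨m, hm⟩ : ∃ m : ℕ, n = (m : ℤ) + 2 := ⟨(n - 2).toNat, by omega⟩
  subst hm
  set s := Real.sqrt 5 with hs_def
  have hs5 : s ^ 2 = 5 := Real.sq_sqrt (by norm_num)
  have hs0 : (0:ℝ) < s := Real.sqrt_pos.mpr (by norm_num)
  have hs2 : (2:ℝ) < s := by nlinarith
  have hs3 : s < 3 := by nlinarith
  have hphi : (1:ℝ) < phi := by unfold phi; linarith
  have hpsi : |psi| < 1 := by unfold psi; rw [abs_lt]; constructor <;> linarith
  set p := phi ^ k with hp_def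
  set q := psi ^ k with hq_def
  have hp1 : (1:ℝ) < p := one_lt_zpow₀ hphi (by omega)
  have hq1 : |q| < 1 := by
    show |psi ^ k| < 1
    have habs : |psi ^ k| = |psi| ^ k := map_zpow₀ (absHom : ℝ →*₀ ℝ) psi k
    rw [habs]
    rcases eq_or_lt_of_le (abs_nonneg psi) with h | h
    · show |psi| ^ k < 1
      rw [← h, zero_zpow _ (by omega)]; norm_num
    · exact zpow_lt_one₀ h hpsi (by omega)
  have hpq : p ≠ q := by
    have := abs_lt.mp hq1
    intro h; rw [h] at hp1; linarith
  have hluc : lucR k = p + q := rfl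
  have hfib : fibR k * s = p - q := by
    rw [show fibR k = (p - q)/s from rfl]; field_simp
  have hb : p - q ≠ 0 := sub_ne_zero.mpr hpq
  have hfibne : fibR k ≠ 0 := by
    rw [show fibR k = (p - q)/s from rfl]
    exact div_ne_zero hb (ne_of_gt hs0)
  have hphikn : phi ^ (k * ((m:ℤ)+2)) = p ^ (m+2) := by
    rw [zpow_mul, hp_def.symm, show ((m:ℤ)+2) = ((m+2 : ℕ) : ℤ) by push_cast; ring,
      zpow_natCast]
  have hpsikn : psi ^ (k * ((m:ℤ)+2)) = q ^ (m+2) := by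
    rw [zpow_mul, hq_def.symm, show ((m:ℤ)+2) = ((m+2 : ℕ) : ℤ) by push_cast; ring,
      zpow_natCast]
  have hluckn : lucR (k * ((m:ℤ)+2)) = p ^ (m+2) + q ^ (m+2) := by
    unfold lucR; rw [hphikn, hpsikn]
  have hfibkn : fibR (k * ((m:ℤ)+2)) = (p ^ (m+2) - q ^ (m+2))/s := by
    unfold fibR; rw [hphikn, hpsikn]
  have hI : (∫ x in (-1:ℝ)..1,
      (lucR k + fibR k * x * s) ^ ((m:ℤ) + 2 - 2) * (fibR k * s + lucR k * x))
      = ∫ x in (-1:ℝ)..1, ((p+q) + (p-q)*x)^m * ((p-q) + (p+q)*x) := by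
    apply intervalIntegral.integral_congr
    intro x _
    have h22 : (m:ℤ) + 2 - 2 = (m:ℤ) := by ring
    simp only [h22, zpow_natCast]
    rw [mul_right_comm (fibR k) x s, hfib, hluc]
  rw [hI, key_int _ _ hb m]
  rw [hluckn, hfibkn, hluc, show fibR k = (p - q)/s from rfl]
  have h2p : (p+q) + (p-q) = 2*p := by ring
  have h2q : (p+q) - (p-q) = 2*q := by ring
  rw [h2p, h2q]
  have hzpow2 : (2:ℝ) ^ ((m:ℤ)+2) = 2 ^ (m+2) := by
    rw [show ((m:ℤ)+2) = ((m+2 : ℕ) : ℤ) by push_cast; ring, zpow_natCast]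
  rw [hzpow2]
  have hm1 : ((m:ℝ)+1) ≠ 0 := by positivity
  have hm2 : ((m:ℝ)+2) ≠ 0 := by positivity
  have hmnn : (0:ℝ) ≤ (m:ℝ) := Nat.cast_nonneg m
  have hn1 : (m:ℝ) + 2 - 1 ≠ 0 := by intro h; linarith
  have hn2 : (m:ℝ) + 2 ≠ 0 := by positivity
  push_cast
  have hsne : s ≠ 0 := ne_of_gt hs0
  field_simp
  ring
end

section
/- For all integers n ≥ 2 and k ≥ 1, ∫_{-1}^{1} (L_k + F_k·x·√5)^{n-2}·(1 − x) dx = (2^n/((n-1)·F_k·√5)) · ( −β^{(n-1)k} + F_{nk}/(n·F_k) ), where β = (1-√5)/2. -/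
open Real MeasureTheory intervalIntegral

lemma key (a b : ℝ) (hab : a - b ≠ 0) (m : ℕ) :
    ∫ x in (-1:ℝ)..1, (a*(1+x) + b*(1-x))^m * (1-x) =
      ((2*a)^(m+2)/(((m:ℝ)+1)*((m:ℝ)+2)) - 2*a*(2*b)^(m+1)/((m:ℝ)+1)
        + (2*b)^(m+2)/((m:ℝ)+2)) / (a-b)^2 := by
  have hm1 : ((m:ℝ)+1) ≠ 0 := by positivity
  have hm2 : ((m:ℝ)+2) ≠ 0 := by positivity
  set F : ℝ → ℝ := fun x => (2*a*((a+b)+(a-b)*x)^(m+1)/((m:ℝ)+1)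
      - ((a+b)+(a-b)*x)^(m+2)/((m:ℝ)+2)) / (a-b)^2 with hF
  have hderiv : ∀ x ∈ Set.uIcc (-1:ℝ) 1,
      HasDerivAt F ((a*(1+x)+b*(1-x))^m * (1-x)) x := by
    intro x _
    have hu : HasDerivAt (fun x : ℝ => (a+b)+(a-b)*x) (a-b) x := by
      simpa using ((hasDerivAt_id x).const_mul (a-b)).const_add (a+b)
    have h1 := (hu.pow (m+1)).const_mul (2*a)
    have h2 := hu.pow (m+2)
    have h := ((h1.div_const ((m:ℝ)+1)).sub (h2.div_const ((m:ℝ)+2))).div_const ((a-b)^2)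
    refine h.congr_deriv ?_
    have hx : a*(1+x)+b*(1-x) = (a+b)+(a-b)*x := by ring
    rw [hx]
    push_cast
    field_simp
    ring
  have hcont : IntervalIntegrable (fun x => (a*(1+x)+b*(1-x))^m * (1-x))
      MeasureTheory.volume (-1:ℝ) 1 := by
    apply Continuous.intervalIntegrable
    fun_prop
  rw [intervalIntegral.integral_eq_sub_of_hasDerivAt hderiv hcont]
  simp only [hF]
  have e1 : (a+b)+(a-b)*(1:ℝ) = 2*a := by ring
  have e2 : (a+b)+(a-b)*(-1:ℝ) = 2*b := by ring
  rw [e1, e2]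
  field_simp
  ring

lemma alg (a b s M : ℝ) (m : ℕ) (hab : a - b ≠ 0) (hs : s ≠ 0)
    (hm1 : M + 1 ≠ 0) (hm2 : M + 2 ≠ 0) :
    ((2*a)^(m+2)/((M+1)*(M+2)) - 2*a*(2*b)^(m+1)/(M+1) + (2*b)^(m+2)/(M+2)) / (a-b)^2
    = 2^(m+2) / ((M+2-1) * ((a-b)/s) * s) *
        (-(b^(m+1)) + (a^(m+2)-b^(m+2))/s / ((M+2) * ((a-b)/s))) := by
  have h1 : (M+2-1) * ((a-b)/s) * s = (M+1)*(a-b) := by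
    field_simp
    ring
  have h2 : (a^(m+2)-b^(m+2))/s / ((M+2) * ((a-b)/s)) = (a^(m+2)-b^(m+2)) / ((M+2)*(a-b)) := by
    rw [div_div]
    congr 1
    field_simp
  rw [h1, h2]
  have e1 : (2*a:ℝ)^(m+2) = 2^(m+2) * a^(m+2) := by rw [mul_pow]
  have e2 : (2*b:ℝ)^(m+1) = 2^(m+1) * b^(m+1) := by rw [mul_pow]
  have e3 : (2*b:ℝ)^(m+2) = 2^(m+2) * b^(m+2) := by rw [mul_pow]
  rw [e1, e2, e3]
  have hp : (2:ℝ)^(m+2) = 2 * 2^(m+1) := by ring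
  field_simp
  ring

set_option maxHeartbeats 1000000 in
theorem stmt10 (n k : ℤ) (hn : 2 ≤ n) (hk : 1 ≤ k) :
    ∫ x in (-1 : ℝ)..1, (lucR k + fibR k * x * Real.sqrt 5) ^ (n - 2) * (1 - x) =
      (2 : ℝ) ^ n / (((n : ℝ) - 1) * fibR k * Real.sqrt 5) *
        (-psi ^ ((n - 1) * k) + fibR (n * k) / ((n : ℝ) * fibR k)) := by
  have h5 : Real.sqrt 5 ^ 2 = 5 := Real.sq_sqrt (by norm_num)
  have h5nn := Real.sqrt_nonneg 5
  have h5gt : 2 < Real.sqrt 5 := by nlinarith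
  have h5lt : Real.sqrt 5 < 3 := by nlinarith
  have h5ne : Real.sqrt 5 ≠ 0 := by positivity
  obtain ⟨m, rfl⟩ : ∃ m : ℕ, n = (m:ℤ) + 2 := ⟨(n-2).toNat, by omega⟩
  obtain ⟨j, rfl⟩ : ∃ j : ℕ, k = (j:ℤ) + 1 := ⟨(k-1).toNat, by omega⟩
  set a : ℝ := phi ^ (j+1) with ha
  set b : ℝ := psi ^ (j+1) with hb
  have hphi : (0:ℝ) < phi := by unfold phi; nlinarith
  have hpsiabs : |psi| < phi := by
    rw [abs_lt]; constructor <;> (unfold phi psi; nlinarith)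
  have hba : b < a := by
    calc b ≤ |b| := le_abs_self _
    _ = |psi|^(j+1) := by rw [hb, abs_pow]
    _ < phi^(j+1) := by
        apply pow_lt_pow_left₀ hpsiabs (abs_nonneg _) (by omega)
    _ = a := rfl
  have hab : a - b ≠ 0 := by intro h; linarith [sub_eq_zero.mp h]
  -- rewrite zpows as nat pows
  have hz : ∀ c : ℝ, c ^ ((j:ℤ)+1) = c ^ (j+1) := by
    intro c; rw [show ((j:ℤ)+1) = ((j+1:ℕ):ℤ) by push_cast; ring, zpow_natCast]
  have hfib : fibR ((j:ℤ)+1) = (a-b)/Real.sqrt 5 := by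
    rw [fibR, hz, hz]
  have hluc : lucR ((j:ℤ)+1) = a + b := by rw [lucR, hz, hz]
  have hfibs : fibR ((j:ℤ)+1) * Real.sqrt 5 = a - b := by
    rw [hfib]; field_simp
  have hexp : ((m:ℤ)+2) - 2 = ((m:ℕ):ℤ) := by push_cast; ring
  have hlhs : (∫ x in (-1 : ℝ)..1,
      (lucR ((j:ℤ)+1) + fibR ((j:ℤ)+1) * x * Real.sqrt 5) ^ (((m:ℤ)+2) - 2) * (1 - x)) =
      ∫ x in (-1 : ℝ)..1, (a*(1+x) + b*(1-x))^m * (1-x) := by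
    congr 1; funext x
    rw [hexp, zpow_natCast]
    congr 1
    rw [hluc]
    rw [show fibR ((j:ℤ)+1) * x * Real.sqrt 5 = fibR ((j:ℤ)+1) * Real.sqrt 5 * x by ring, hfibs]
    ring
  rw [hlhs, key a b hab m]
  -- RHS pieces
  have hphine : phi ≠ 0 := ne_of_gt hphi
  have hpsine : psi ≠ 0 := by
    unfold psi; intro h; nlinarith [h]
  have hpsipow : psi ^ ((((m:ℤ)+2) - 1) * ((j:ℤ)+1)) = b ^ (m+1) := by
    rw [show (((m:ℤ)+2) - 1) * ((j:ℤ)+1) = ((j:ℤ)+1) * (((m+1:ℕ):ℤ)) by push_cast; ring,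
      zpow_mul, zpow_natCast, hz]
  have hphipow : phi ^ (((m:ℤ)+2) * ((j:ℤ)+1)) = a ^ (m+2) := by
    rw [show ((m:ℤ)+2) * ((j:ℤ)+1) = ((j:ℤ)+1) * (((m+2:ℕ):ℤ)) by push_cast; ring,
      zpow_mul, zpow_natCast, hz]
  have hpsipow2 : psi ^ (((m:ℤ)+2) * ((j:ℤ)+1)) = b ^ (m+2) := by
    rw [show ((m:ℤ)+2) * ((j:ℤ)+1) = ((j:ℤ)+1) * (((m+2:ℕ):ℤ)) by push_cast; ring,
      zpow_mul, zpow_natCast, hz]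
  have h2pow : (2:ℝ) ^ ((m:ℤ)+2) = 2 ^ (m+2) := by
    rw [show ((m:ℤ)+2) = ((m+2:ℕ):ℤ) by push_cast; ring, zpow_natCast]
  have hfib2 : fibR (((m:ℤ)+2) * ((j:ℤ)+1)) = (a^(m+2) - b^(m+2))/Real.sqrt 5 := by
    rw [fibR, hphipow, hpsipow2]
  rw [hpsipow, h2pow, hfib2, hfib]
  clear_value a b
  have hm1 : ((m:ℝ)+1) ≠ 0 := by positivity
  have hm2 : ((m:ℝ)+2) ≠ 0 := by positivity
  push_cast
  exact alg a b (Real.sqrt 5) (m:ℝ) m hab h5ne hm1 hm2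
end

section
/- For all integers n ≥ 2 and k ≥ 1, ∫_{-1}^{1} (L_k + F_k·x·√5)^{n-2}·x dx = (2^n/((n-1)·√5·F_k)) · ( L_{(n-1)k}/2 − F_{nk}/(n·F_k) ). -/
open Real MeasureTheory intervalIntegral

set_option maxHeartbeats 1000000 in
theorem stmt11 (n k : ℤ) (hn : 2 ≤ n) (hk : 1 ≤ k) :
    ∫ x in (-1 : ℝ)..1, (lucR k + fibR k * x * Real.sqrt 5) ^ (n - 2) * x =
      (2 : ℝ) ^ n / (((n : ℝ) - 1) * Real.sqrt 5 * fibR k) *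
        (lucR ((n - 1) * k) / 2 - fibR (n * k) / ((n : ℝ) * fibR k)) := by
  obtain ⟨m, rfl⟩ : ∃ m : ℕ, n = (m : ℤ) + 2 := ⟨(n - 2).toNat, by omega⟩
  have hs5 : Real.sqrt 5 ^ 2 = 5 := Real.sq_sqrt (by norm_num)
  have hs0 : (0:ℝ) < Real.sqrt 5 := Real.sqrt_pos.mpr (by norm_num)
  set s := Real.sqrt 5 with hsdef
  have hs1 : (1:ℝ) < s := by nlinarith
  have hs3 : s < 3 := by nlinarith
  set p := phi ^ k with hpdef
  set q := psi ^ k with hqdef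
  have hphi : 1 < phi := by unfold phi; linarith
  have hpsi0 : psi < 0 := by unfold psi; linarith
  have hpsi1 : -1 < psi := by unfold psi; linarith
  have hp1 : 1 < p := one_lt_zpow₀ hphi (by omega)
  have hq1 : |q| < 1 := by
    rw [hqdef, ← sq_lt_one_iff_abs_lt_one]
    have : (psi ^ k) ^ 2 = (psi ^ 2) ^ k := by
      rw [← zpow_natCast (psi ^ k) 2, ← zpow_mul, mul_comm, zpow_mul, zpow_natCast]
    rw [this]
    exact zpow_lt_one₀ (by nlinarith) (by nlinarith) (by omega)
  have hd : 0 < p - q := by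
    have := abs_lt.mp hq1
    linarith
  set c := p + q with hcdef
  set d := p - q with hddef
  have hfib : fibR k = d / s := rfl
  have hluc : lucR k = c := rfl
  have hd0 : d ≠ 0 := hd.ne'
  have hm1 : ((m:ℝ) + 1) ≠ 0 := by positivity
  have hm2 : ((m:ℝ) + 2) ≠ 0 := by positivity
  -- rewrite integrand
  have hintg : ∀ x : ℝ, (lucR k + fibR k * x * s) ^ ((m:ℤ) + 2 - 2) * x
      = (c + d * x) ^ m * x := by
    intro x
    rw [hluc, hfib]
    have : (m:ℤ) + 2 - 2 = (m:ℤ) := by ring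
    rw [this, zpow_natCast]
    field_simp
  have hF : ∀ x : ℝ, HasDerivAt
      (fun x => ((c + d*x)^(m+2)/((m:ℝ)+2) - c*(c + d*x)^(m+1)/((m:ℝ)+1))/d^2)
      ((c + d * x) ^ m * x) x := by
    intro x
    have hb : HasDerivAt (fun x : ℝ => c + d * x) d x := by
      simpa using ((hasDerivAt_id x).const_mul d).const_add c
    have h1 : HasDerivAt (fun x : ℝ => (c + d*x)^(m+2))
        (((m:ℝ)+2) * (c + d*x)^(m+1) * d) x := by
      have := hb.fun_pow (m+2)
      refine this.congr_deriv ?_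
      push_cast
      ring
    have h2 : HasDerivAt (fun x : ℝ => (c + d*x)^(m+1))
        (((m:ℝ)+1) * (c + d*x)^m * d) x := by
      have := hb.fun_pow (m+1)
      refine this.congr_deriv ?_
      push_cast
      ring
    have := ((h1.div_const ((m:ℝ)+2)).fun_sub ((h2.const_mul c).div_const ((m:ℝ)+1))).div_const (d^2)
    refine this.congr_deriv ?_
    have e1 : (c+d*x)^(m+1) = (c+d*x)^m * (c+d*x) := pow_succ _ _
    field_simp
    ring
  have hcont : Continuous (fun x : ℝ => (c + d * x) ^ m * x) := by continuity
  have hint : (∫ x in (-1:ℝ)..1, (lucR k + fibR k * x * s) ^ ((m:ℤ) + 2 - 2) * x)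
      = ((c + d*1)^(m+2)/((m:ℝ)+2) - c*(c + d*1)^(m+1)/((m:ℝ)+1))/d^2
        - ((c + d*(-1))^(m+2)/((m:ℝ)+2) - c*(c + d*(-1))^(m+1)/((m:ℝ)+1))/d^2 := by
    rw [show (∫ x in (-1:ℝ)..1, (lucR k + fibR k * x * s) ^ ((m:ℤ) + 2 - 2) * x)
        = ∫ x in (-1:ℝ)..1, (c + d * x) ^ m * x from by
      congr 1; ext x; exact hintg x]
    exact integral_eq_sub_of_hasDerivAt (fun x _ => hF x)
      (hcont.intervalIntegrable _ _)
  rw [hint]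
  -- rhs rewriting
  have hl1 : lucR (((m:ℤ) + 2 - 1) * k) = p^(m+1) + q^(m+1) := by
    rw [lucR, show ((m:ℤ) + 2 - 1) * k = k * ((m:ℤ)+1) by ring, zpow_mul, zpow_mul,
      ← hpdef, ← hqdef, show ((m:ℤ)+1) = ((m+1 : ℕ) : ℤ) by push_cast; ring,
      zpow_natCast, zpow_natCast]
  have hf2 : fibR (((m:ℤ) + 2) * k) = (p^(m+2) - q^(m+2)) / s := by
    rw [fibR, show ((m:ℤ) + 2) * k = k * ((m:ℤ)+2) by ring, zpow_mul, zpow_mul,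
      ← hpdef, ← hqdef, show ((m:ℤ)+2) = ((m+2 : ℕ) : ℤ) by push_cast; ring,
      zpow_natCast, zpow_natCast]
  have h2p : (2:ℝ) ^ ((m:ℤ) + 2) = 2 ^ (m+2) := by
    rw [show ((m:ℤ)+2) = ((m+2 : ℕ) : ℤ) by push_cast; ring, zpow_natCast]
  rw [hl1, hf2, hfib, h2p]
  have hcp : c + d * 1 = 2 * p := by rw [hcdef, hddef]; ring
  have hcm : c + d * (-1) = 2 * q := by rw [hcdef, hddef]; ring
  rw [hcp, hcm]
  push_cast
  have e3 : ∀ y : ℝ, y^(m+2) = y^m*y*y := by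
    intro y; rw [pow_succ, pow_succ]
  have e4 : ∀ y : ℝ, y^(m+1) = y^m*y := by
    intro y; rw [pow_succ]
  have e1 : ∀ y : ℝ, (2*y)^(m+2) = 2^m*4*(y^m*y*y) := by
    intro y; rw [mul_pow, e3, e3]; ring
  have e2 : ∀ y : ℝ, (2*y)^(m+1) = 2^m*2*(y^m*y) := by
    intro y; rw [mul_pow, e4, e4]
  simp only [e1, e2, e3, e4]
  rw [hcdef, hddef, show ((m:ℝ) + 2 - 1) = ((m:ℝ) + 1) by ring]
  rw [hddef] at hd0
  field_simp
  ring
end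

section
/- For every positive integer n, ∫_0^π (1 + (√5/3)·cos x)^{n-1} · ln(1 + (√5/3)·cos x) · sin x dx = (6/(n√5))·(2/3)^n·L_{2n}·ln α + ( −1/n + ln(2/3) )·(2/3)^n·(3/n)·F_{2n}, where α = (1+√5)/2. -/
open Real MeasureTheory intervalIntegral

set_option maxHeartbeats 1600000 in
theorem stmt12 (n : ℕ) (hn : 0 < n) :
    ∫ x in (0 : ℝ)..Real.pi,
        (1 + Real.sqrt 5 / 3 * Real.cos x) ^ (n - 1) *
          Real.log (1 + Real.sqrt 5 / 3 * Real.cos x) * Real.sin x =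
      6 / (n * Real.sqrt 5) * (2 / 3 : ℝ) ^ n * lucR (2 * n) * Real.log phi +
        (-(1 / (n : ℝ)) + Real.log (2 / 3)) * (2 / 3 : ℝ) ^ n * (3 / n) * fibR (2 * n) := by
  have hs5 : Real.sqrt 5 ^ 2 = 5 := Real.sq_sqrt (by norm_num)
  have hs5pos : (0:ℝ) < Real.sqrt 5 := Real.sqrt_pos.mpr (by norm_num)
  have hslt : Real.sqrt 5 < 3 := by nlinarith
  have hn0 : (n:ℝ) ≠ 0 := Nat.cast_ne_zero.mpr hn.ne'
  set s := Real.sqrt 5 with hs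
  set c : ℝ := s / 3 with hc
  have hc0 : 0 < c := by positivity
  have hc1 : c < 1 := by rw [hc]; linarith
  have hu_pos : ∀ x : ℝ, 0 < 1 + c * Real.cos x := by
    intro x
    nlinarith [Real.neg_one_le_cos x, Real.cos_le_one x]
  set F : ℝ → ℝ := fun x => -(3 / s) *
      ((1 + c * Real.cos x) ^ n * Real.log (1 + c * Real.cos x) / n
        - (1 + c * Real.cos x) ^ n / (n:ℝ)^2) with hF
  have hderiv : ∀ x ∈ Set.uIcc (0:ℝ) Real.pi, HasDerivAt F
      ((1 + c * Real.cos x) ^ (n-1) * Real.log (1 + c * Real.cos x) * Real.sin x) x := by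
    intro x _
    have hupos := hu_pos x
    set u := 1 + c * Real.cos x with hu
    have hinner : HasDerivAt (fun x => 1 + c * Real.cos x) (c * (-Real.sin x)) x :=
      ((Real.hasDerivAt_cos x).const_mul c).const_add 1
    have hpow : HasDerivAt (fun u : ℝ => u ^ n) ((n:ℝ) * u ^ (n-1)) u := hasDerivAt_pow n u
    have hlog : HasDerivAt Real.log u⁻¹ u := Real.hasDerivAt_log hupos.ne'
    have hun : u ^ n = u ^ (n-1) * u := by
      rw [← pow_succ, Nat.sub_add_cancel hn]
    have hg : HasDerivAt (fun u : ℝ => u ^ n * Real.log u / n - u ^ n / (n:ℝ)^2)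
        (u ^ (n-1) * Real.log u) u := by
      have h := ((hpow.mul hlog).div_const (n:ℝ)).sub (hpow.div_const ((n:ℝ)^2))
      refine h.congr_deriv ?_
      rw [hun]
      field_simp
      ring
    have h2 := (hg.comp x hinner).const_mul (-(3 / s))
    refine h2.congr_deriv ?_
    rw [hc]
    field_simp
  have hcontu : Continuous fun x : ℝ => 1 + c * Real.cos x := by continuity
  have hcont : ContinuousOn
      (fun x => (1 + c * Real.cos x) ^ (n-1) * Real.log (1 + c * Real.cos x) * Real.sin x)
      (Set.uIcc (0:ℝ) Real.pi) := by
    apply Continuous.continuousOn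
    apply Continuous.mul ?_ Real.continuous_sin
    apply Continuous.mul (by continuity)
    exact continuous_iff_continuousAt.mpr fun x =>
      ContinuousAt.comp (g := Real.log) (f := fun x => 1 + c * Real.cos x)
        (Real.continuousAt_log (hu_pos x).ne') hcontu.continuousAt
  have hint := intervalIntegral.integral_eq_sub_of_hasDerivAt hderiv
    (hcont.intervalIntegrable)
  rw [hint]
  -- now evaluate
  have hphi_pos : (0:ℝ) < phi := by rw [phi]; positivity
  have hpsi_ne : psi ≠ 0 := by
    rw [psi]
    intro h
    have : s = 1 := by linarith [(div_eq_zero_iff.mp h)]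
    nlinarith
  have hphipsi : phi * psi = -1 := by
    rw [phi, psi]; field_simp; nlinarith
  have h1p : 1 + c = 2/3 * phi ^ 2 := by
    rw [hc, phi]; field_simp; nlinarith
  have h1m : 1 - c = 2/3 * psi ^ 2 := by
    rw [hc, psi]; field_simp; nlinarith
  have hpsisq : psi ^ 2 = (phi ^ 2)⁻¹ := by
    exact eq_inv_of_mul_eq_one_left (by nlinarith)
  have hlogp : Real.log (1 + c) = Real.log (2/3) + 2 * Real.log phi := by
    rw [h1p, Real.log_mul (by norm_num) (by positivity), Real.log_pow]
    push_cast; ring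
  have hlogm : Real.log (1 - c) = Real.log (2/3) - 2 * Real.log phi := by
    rw [h1m, Real.log_mul (by norm_num) (by positivity), hpsisq, Real.log_inv, Real.log_pow]
    push_cast; ring
  have hap : (1 + c) ^ n = (2/3:ℝ)^n * phi ^ (2*n) := by
    rw [h1p, mul_pow, pow_mul]
  have ham : (1 - c) ^ n = (2/3:ℝ)^n * psi ^ (2*n) := by
    rw [h1m, mul_pow, pow_mul]
  have hfib : fibR (2*n) = (phi ^ (2*n) - psi ^ (2*n)) / s := by
    rw [fibR]
    norm_cast
  have hluc : lucR (2*n) = phi ^ (2*n) + psi ^ (2*n) := by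
    rw [lucR]
    norm_cast
  rw [hfib, hluc, hF]
  simp only [Real.cos_pi, Real.cos_zero]
  have e1 : 1 + c * (-1) = 1 - c := by ring
  have e2 : 1 + c * 1 = 1 + c := by ring
  rw [e1, e2, hap, ham, hlogp, hlogm]
  field_simp
  ring
end

section
/- For every nonnegative real q, ∫_0^{π/2} ln(1 + q²·tan² x) dx = π·ln(1 + q). -/
open Real MeasureTheory intervalIntegral

set_option maxHeartbeats 1000000

lemma neg_log_le (u : ℝ) (h0 : 0 < u) : -Real.log u ≤ 2 * u ^ (-(1/2) : ℝ) := by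
  have h1 : Real.log (u ^ (-(1/2) : ℝ)) = -(1/2) * Real.log u := Real.log_rpow h0 _
  have h2 : Real.log (u ^ (-(1/2) : ℝ)) ≤ u ^ (-(1/2) : ℝ) - 1 :=
    Real.log_le_sub_one_of_pos (Real.rpow_pos_of_pos h0 _)
  nlinarith [Real.rpow_pos_of_pos h0 (-(1/2) : ℝ)]

lemma logcos_int : IntervalIntegrable (fun x => Real.log (Real.cos x)) volume 0 (Real.pi/2) := by
  have hg : IntervalIntegrable (fun x : ℝ => 2 * Real.sqrt (Real.pi/2) * (Real.pi/2 - x) ^ (-(1/2) : ℝ)) volume 0 (Real.pi/2) := by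
    have h := (intervalIntegral.intervalIntegrable_rpow' (a := 0) (b := Real.pi/2)
      (r := (-(1/2) : ℝ)) (by norm_num)).comp_sub_left (Real.pi/2)
    simpa using (h.const_mul (2 * Real.sqrt (Real.pi/2))).symm
  apply hg.mono_fun' ((Real.measurable_log.comp Real.measurable_cos).aestronglyMeasurable)
  have hπ := Real.pi_pos
  filter_upwards [ae_restrict_mem measurableSet_uIoc] with x hx
  simp only [Function.comp_apply]
  rw [Set.uIoc_of_le (by positivity)] at hx
  rcases eq_or_lt_of_le hx.2 with h | h
  · simp [h, Real.cos_pi_div_two]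
  · have hc : 0 < Real.cos x := Real.cos_pos_of_mem_Ioo ⟨by linarith [hx.1], h⟩
    have hc1 : Real.cos x ≤ 1 := Real.cos_le_one x
    have hlog : Real.log (Real.cos x) ≤ 0 := Real.log_nonpos (by linarith) hc1
    have hb : 2/Real.pi * (Real.pi/2 - x) ≤ Real.cos x := by
      have := Real.mul_le_sin (x := Real.pi/2 - x) (by linarith) (by linarith [hx.1])
      simpa [Real.sin_pi_div_two_sub] using this
    have hd : (0:ℝ) < Real.pi/2 - x := by linarith
    have key : Real.cos x ^ (-(1/2):ℝ) ≤ Real.sqrt (Real.pi/2) * (Real.pi/2 - x) ^ (-(1/2):ℝ) := by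
      have h1 : (2/Real.pi * (Real.pi/2 - x)) ^ (-(1/2):ℝ) = (2/Real.pi) ^ (-(1/2):ℝ) * (Real.pi/2 - x) ^ (-(1/2):ℝ) :=
        Real.mul_rpow (by positivity) (by positivity)
      have h2 : Real.cos x ^ (-(1/2):ℝ) ≤ (2/Real.pi * (Real.pi/2 - x)) ^ (-(1/2):ℝ) :=
        Real.rpow_le_rpow_of_nonpos (by positivity) hb (by norm_num)
      have h3 : (2/Real.pi) ^ (-(1/2):ℝ) = Real.sqrt (Real.pi/2) := by
        rw [Real.rpow_neg (by positivity), ← Real.inv_rpow (by positivity), inv_div,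
          Real.sqrt_eq_rpow]
      rw [h1, h3] at h2; exact h2
    have : ‖Real.log (Real.cos x)‖ = -Real.log (Real.cos x) := by
      rw [Real.norm_eq_abs, abs_of_nonpos hlog]
    rw [this]
    calc -Real.log (Real.cos x) ≤ 2 * Real.cos x ^ (-(1/2):ℝ) := neg_log_le _ hc
      _ ≤ 2 * (Real.sqrt (Real.pi/2) * (Real.pi/2 - x) ^ (-(1/2):ℝ)) := by nlinarith [key]
      _ = 2 * Real.sqrt (Real.pi/2) * (Real.pi/2 - x) ^ (-(1/2):ℝ) := by ring



lemma F_int (q : ℝ) :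
    IntervalIntegrable (fun x => Real.log (1 + q^2 * Real.tan x^2)) volume 0 (Real.pi/2) := by
  have hπ := Real.pi_pos
  have hg : IntervalIntegrable (fun x => Real.log (1 + q^2) + 2 * |Real.log (Real.cos x)|)
      volume 0 (Real.pi/2) := by
    exact (_root_.intervalIntegrable_const).add ((logcos_int.abs).const_mul 2)
  apply hg.mono_fun' (by
    apply Measurable.aestronglyMeasurable
    have mtan : Measurable Real.tan := by
      have : Real.tan = fun x => Real.sin x / Real.cos x := funext Real.tan_eq_sin_div_cos
      rw [this]; exact Real.measurable_sin.div Real.measurable_cos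
    exact Real.measurable_log.comp ((measurable_const.add ((mtan.pow_const 2).const_mul _))))
  filter_upwards [ae_restrict_mem measurableSet_uIoc] with x hx
  rw [Set.uIoc_of_le (by positivity)] at hx
  have h1 : (1:ℝ) ≤ 1 + q^2 * Real.tan x^2 := by nlinarith [sq_nonneg (q * Real.tan x)]
  have hnn : 0 ≤ Real.log (1 + q^2 * Real.tan x^2) := Real.log_nonneg h1
  rw [Real.norm_eq_abs, abs_of_nonneg hnn]
  rcases eq_or_lt_of_le hx.2 with h | h
  · simp only [h, Real.tan_pi_div_two, Real.cos_pi_div_two, Real.log_zero, abs_zero]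
    simp only [ne_eq, OfNat.ofNat_ne_zero, not_false_eq_true, zero_pow, mul_zero, add_zero,
      Real.log_one]
    have := Real.log_nonneg (show (1:ℝ) ≤ 1 + q^2 by nlinarith [sq_nonneg q])
    linarith
  · have hc : 0 < Real.cos x := Real.cos_pos_of_mem_Ioo ⟨by linarith [hx.1], h⟩
    have habs : |Real.log (Real.cos x)| = -Real.log (Real.cos x) := by
      rw [abs_of_nonpos (Real.log_nonpos (by linarith) (Real.cos_le_one x))]
    rw [habs]
    have htan : Real.tan x = Real.sin x / Real.cos x := Real.tan_eq_sin_div_cos x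
    have hkey : 1 + q^2 * Real.tan x^2 = (Real.cos x^2 + q^2 * Real.sin x^2) / Real.cos x^2 := by
      rw [htan]; field_simp
    rw [hkey, Real.log_div (by nlinarith [Real.sin_sq_add_cos_sq x, sq_nonneg (q*Real.sin x)]) (by positivity)]
    have h2 : Real.log (Real.cos x^2 + q^2 * Real.sin x^2) ≤ Real.log (1 + q^2) := by
      apply Real.log_le_log (by nlinarith [Real.sin_sq_add_cos_sq x, sq_nonneg (q*Real.sin x)])
      nlinarith [Real.sin_sq_add_cos_sq x, Real.neg_one_le_sin x, Real.sin_le_one x, Real.cos_le_one x, Real.neg_one_le_cos x, sq_nonneg q]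
    have h3 : Real.log (Real.cos x^2) = 2 * Real.log (Real.cos x) := by
      rw [sq, Real.log_mul hc.ne' hc.ne']; ring
    linarith


lemma antider (q : ℝ) (hq : 0 < q) (hq1 : q ≠ 1) (x : ℝ) :
    HasDerivAt (fun y : ℝ => (1/(q^2-1)) * ((1 - 1/q)*y -
      (1/q) * Real.arctan ((q-1)*Real.sin y*Real.cos y/(Real.cos y^2 + q*Real.sin y^2))))
      (Real.sin x^2 / (Real.cos x^2 + q^2*Real.sin x^2)) x := by
  have pyth := Real.sin_sq_add_cos_sq x
  set s := Real.sin x with hs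
  set c := Real.cos x with hc
  have hs2 : s^2 ≤ 1 := by nlinarith [sq_nonneg c]
  have hb : 0 < c^2 + q*s^2 := by
    rcases le_total q 1 with h|h
    · nlinarith [sq_nonneg s, sq_nonneg c]
    · nlinarith [sq_nonneg s, sq_nonneg c]
  have hD : 0 < c^2 + q^2*s^2 := by
    rcases le_total (q^2) 1 with h|h
    · nlinarith [sq_nonneg s, sq_nonneg c, mul_pos hq hq]
    · nlinarith [sq_nonneg s, sq_nonneg c, mul_pos hq hq]
  -- derivative of numerator t = (q-1)*sin*cos
  have ht : HasDerivAt (fun y => (q-1)*Real.sin y*Real.cos y)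
      ((q-1)*(c*c + s*(-s))) x := by
    have h := (((Real.hasDerivAt_sin x).const_mul (q-1)).mul (Real.hasDerivAt_cos x))
    convert h using 1
    case e'_4 => rfl
    case e'_5 => rfl
    case e'_8 => rfl
    simp [hs, hc] <;> ring
  -- derivative of denominator
  have hbd : HasDerivAt (fun y => Real.cos y^2 + q*Real.sin y^2)
      (2*c*(-s) + q*(2*s*c)) x := by
    have h1 := (Real.hasDerivAt_cos x).pow 2
    have h2 := ((Real.hasDerivAt_sin x).pow 2).const_mul q
    have h := h1.add h2
    convert h using 1
    case e'_4 => rfl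
    case e'_5 => rfl
    case e'_8 => rfl
    simp [hs, hc] <;> ring
  have hu : HasDerivAt (fun y => (q-1)*Real.sin y*Real.cos y/(Real.cos y^2 + q*Real.sin y^2))
      ((((q-1)*(c*c + s*(-s))) * (c^2 + q*s^2) - ((q-1)*s*c) * (2*c*(-s) + q*(2*s*c))) /
        (c^2 + q*s^2)^2) x := ht.div hbd hb.ne'
  have harc := hu.arctan
  have hA := ((((hasDerivAt_id x).const_mul (1 - 1/q)).sub (harc.const_mul (1/q))).const_mul
    (1/(q^2-1)))
  convert hA using 1
  case e'_4 => rfl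
  case e'_5 => rfl
  case e'_8 => rfl
  -- now the algebraic identity
  have e2 : (((q-1)*(c*c + s*(-s))) * (c^2 + q*s^2) - ((q-1)*s*c) * (2*c*(-s) + q*(2*s*c)))
      = (q-1)*(c^2 - q*s^2) := by linear_combination ((q-1)*c^2 - (q-1)*q*s^2) * pyth
  have e1 : 1 + ((q-1)*s*c/(c^2 + q*s^2))^2 = (c^2 + q^2*s^2) / (c^2 + q*s^2)^2 := by
    field_simp
    linear_combination (c^2 + q^2*s^2) * pyth
  rw [e2, e1]
  have hq2 : q^2 - 1 ≠ 0 := by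
    intro h
    have h2 : (q-1)*(q+1) = 0 := by linear_combination h
    rcases mul_eq_zero.mp h2 with h3 | h3
    · exact hq1 (by linarith)
    · linarith
  field_simp
  have hD2 : c^2 + s^2*q^2 ≠ 0 := (by linarith [hD] : (0:ℝ) < c^2 + s^2*q^2).ne'
  have hb2 : c^2 + s^2*q ≠ 0 := (by linarith [hb] : (0:ℝ) < c^2 + s^2*q).ne'
  field_simp
  ring

lemma denom_pos (q : ℝ) (hq : 0 < q) (x : ℝ) : 0 < Real.cos x^2 + q^2*Real.sin x^2 := by
  have pyth := Real.sin_sq_add_cos_sq x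
  rcases le_total (q^2) 1 with h|h
  · nlinarith [sq_nonneg (Real.sin x), sq_nonneg (Real.cos x), mul_pos hq hq]
  · nlinarith [sq_nonneg (Real.sin x), sq_nonneg (Real.cos x), mul_pos hq hq]

lemma key_integral (q : ℝ) (hq : 0 < q) :
    ∫ x in (0:ℝ)..(Real.pi/2), 2*q*Real.tan x^2/(1+q^2*Real.tan x^2) = Real.pi/(1+q) := by
  have hπ := Real.pi_pos
  have h1 : (∫ x in (0:ℝ)..(Real.pi/2), 2*q*Real.tan x^2/(1+q^2*Real.tan x^2))
      = ∫ x in (0:ℝ)..(Real.pi/2), 2*q*(Real.sin x^2/(Real.cos x^2+q^2*Real.sin x^2)) := by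
    apply intervalIntegral.integral_congr_ae
    have hne : ∀ᵐ y : ℝ, y ≠ Real.pi/2 := by
      rw [MeasureTheory.ae_iff]
      simp only [ne_eq, not_not, Set.setOf_eq_eq_singleton]
      exact measure_singleton _
    filter_upwards [hne] with x hxne hmem
    rw [Set.uIoc_of_le (by positivity)] at hmem
    have hxlt : x < Real.pi/2 := lt_of_le_of_ne hmem.2 hxne
    have hc : 0 < Real.cos x := Real.cos_pos_of_mem_Ioo ⟨by linarith [hmem.1], hxlt⟩
    have hD := (denom_pos q hq x).ne'
    rw [Real.tan_eq_sin_div_cos]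
    have hE : 0 < 1 + q^2*(Real.sin x/Real.cos x)^2 := by positivity
    field_simp
    try ring
  rw [h1, intervalIntegral.integral_const_mul]
  have h2 : (∫ x in (0:ℝ)..(Real.pi/2), Real.sin x^2/(Real.cos x^2+q^2*Real.sin x^2))
      = Real.pi/(2*q*(1+q)) := by
    rcases eq_or_ne q 1 with rfl | hq1
    · have : ∀ x : ℝ, Real.sin x^2/(Real.cos x^2+1^2*Real.sin x^2) = Real.sin x^2 := by
        intro x
        have pyth := Real.sin_sq_add_cos_sq x
        rw [show Real.cos x^2+1^2*Real.sin x^2 = 1 by linarith, div_one]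
      rw [intervalIntegral.integral_congr (fun x _ => this x), integral_sin_sq]
      simp [Real.sin_pi_div_two, Real.cos_pi_div_two]
      try ring
    · have hcont : Continuous (fun x => Real.sin x^2/(Real.cos x^2+q^2*Real.sin x^2)) := by
        apply Continuous.div
        · fun_prop
        · fun_prop
        · exact fun x => (denom_pos q hq x).ne'
      rw [intervalIntegral.integral_eq_sub_of_hasDerivAt
        (fun x _ => antider q hq hq1 x) (hcont.intervalIntegrable _ _)]
      have hq2 : q^2 - 1 ≠ 0 := by
        intro h
        have h2 : (q-1)*(q+1) = 0 := by linear_combination h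
        rcases mul_eq_zero.mp h2 with h3 | h3
        · exact hq1 (by linarith)
        · linarith
      simp [Real.sin_pi_div_two, Real.cos_pi_div_two, Real.sin_zero, Real.cos_zero,
        Real.arctan_zero]
      field_simp
      ring
  rw [h2]
  field_simp



noncomputable def Fq (p : ℝ) : ℝ := ∫ x in (0:ℝ)..(Real.pi/2), Real.log (1 + p^2 * Real.tan x^2)

lemma mtan : Measurable Real.tan := by
  have : Real.tan = fun x => Real.sin x / Real.cos x := funext Real.tan_eq_sin_div_cos
  rw [this]; exact Real.measurable_sin.div Real.measurable_cos

lemma Fq_hasDeriv (q : ℝ) (hq : 0 < q) : HasDerivAt Fq (Real.pi/(1+q)) q := by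
  have key := intervalIntegral.hasDerivAt_integral_of_dominated_loc_of_deriv_le
    (F := fun p x => Real.log (1 + p^2 * Real.tan x^2))
    (F' := fun p x => 2*p*Real.tan x^2/(1+p^2*Real.tan x^2))
    (x₀ := q) (a := 0) (b := Real.pi/2) (μ := volume)
    (bound := fun _ => 4/q) (s := Metric.ball q (q/2)) (Metric.ball_mem_nhds _ (by positivity))
    ?_ (F_int q) ?_ ?_ ?_ ?_
  · have h2 := key.2
    rw [key_integral q hq] at h2
    exact h2
  · filter_upwards with p
    exact (Real.measurable_log.comp
      (measurable_const.add ((mtan.pow_const 2).const_mul _))).aestronglyMeasurable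
  · exact (((mtan.pow_const 2).const_mul _).div
      (measurable_const.add ((mtan.pow_const 2).const_mul _))).aestronglyMeasurable
  · filter_upwards with x _ p hp
    rw [Metric.mem_ball, Real.dist_eq] at hp
    have hp1 : q/2 < p := by cases abs_lt.mp hp; linarith
    have hp0 : 0 < p := by linarith
    have hT : 0 ≤ Real.tan x^2 := sq_nonneg _
    have hden : 0 < 1 + p^2*Real.tan x^2 := by positivity
    have hval : 0 ≤ 2*p*Real.tan x^2/(1+p^2*Real.tan x^2) := by positivity
    rw [Real.norm_eq_abs, abs_of_nonneg hval]
    have step1 : 2*p*Real.tan x^2/(1+p^2*Real.tan x^2) ≤ 2/p := by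
      rw [div_le_div_iff₀ hden hp0]
      nlinarith [sq_nonneg (p*Real.tan x)]
    have step2 : 2/p ≤ 4/q := by
      rw [div_le_div_iff₀ hp0 hq]
      nlinarith
    linarith
  · exact intervalIntegrable_const
  · filter_upwards with x _ p hp
    have hden : 0 < 1 + p^2*Real.tan x^2 := by positivity
    have hinner : HasDerivAt (fun p : ℝ => 1 + p^2 * Real.tan x^2)
        (2*p*Real.tan x^2) p := by
      have h := ((hasDerivAt_pow 2 p).mul_const (Real.tan x^2)).const_add 1
      convert h using 1
      case e'_4 => rfl
      case e'_5 => rfl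
      ring
    have := hinner.log hden.ne'
    convert this using 1





lemma mtan' : Measurable Real.tan := by
  have : Real.tan = fun x => Real.sin x / Real.cos x := funext Real.tan_eq_sin_div_cos
  rw [this]; exact Real.measurable_sin.div Real.measurable_cos

lemma Fq_tendsto : Filter.Tendsto Fq (nhdsWithin 0 (Set.Ioi 0)) (nhds 0) := by
  have key : Filter.Tendsto Fq (nhdsWithin 0 (Set.Ioi 0))
      (nhds (∫ x in (0:ℝ)..(Real.pi/2), (0:ℝ))) := by
    apply intervalIntegral.tendsto_integral_filter_of_dominated_convergence
      (bound := fun x => Real.log (1 + Real.tan x^2))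
    · filter_upwards with p
      exact (Real.measurable_log.comp
        (measurable_const.add ((mtan'.pow_const 2).const_mul _))).aestronglyMeasurable
    · filter_upwards [Ioc_mem_nhdsGT_of_mem (Set.mem_Ico.mpr ⟨le_refl (0:ℝ), zero_lt_one⟩)]
        with p hp
      filter_upwards with x _
      have hT : 0 ≤ Real.tan x^2 := sq_nonneg _
      have h1 : (1:ℝ) ≤ 1 + p^2*Real.tan x^2 := by nlinarith [sq_nonneg (p*Real.tan x)]
      rw [Real.norm_eq_abs, abs_of_nonneg (Real.log_nonneg h1)]
      apply Real.log_le_log (by linarith)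
      nlinarith [mul_nonneg (show (0:ℝ) ≤ 1 - p^2 by nlinarith [hp.1, hp.2]) hT]
    · simpa using F_int 1
    · filter_upwards with x _
      have hcont : Filter.Tendsto (fun p : ℝ => 1 + p^2*Real.tan x^2) (nhds 0) (nhds 1) := by
        have : Continuous (fun p : ℝ => 1 + p^2*Real.tan x^2) := by fun_prop
        have h := this.tendsto 0
        simpa using h
      have hlog := (Real.continuousAt_log (by norm_num : (1:ℝ) ≠ 0)).tendsto
      have := hlog.comp hcont
      rw [Real.log_one] at this
      exact this.mono_left nhdsWithin_le_nhds
  simpa using key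

theorem stmt13 (q : ℝ) (hq : 0 ≤ q) :
    ∫ x in (0 : ℝ)..(Real.pi / 2), Real.log (1 + q ^ 2 * Real.tan x ^ 2) =
      Real.pi * Real.log (1 + q) := by
  rcases hq.eq_or_lt with rfl | hq0
  · simp
  have hπ := Real.pi_pos
  show Fq q = Real.pi * Real.log (1 + q)
  have hconst : ∀ p, p ∈ Set.Ioc (0:ℝ) q →
      Fq p - Real.pi * Real.log (1+p) = Fq q - Real.pi * Real.log (1+q) := by
    intro p hp
    have hsub : Set.uIcc p q ⊆ Set.Ioi (0:ℝ) := by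
      rw [Set.uIcc_of_le hp.2]
      intro t ht
      exact lt_of_lt_of_le hp.1 ht.1
    have h1 : ∫ t in p..q, Real.pi/(1+t) = Fq q - Fq p := by
      apply intervalIntegral.integral_eq_sub_of_hasDerivAt
      · exact fun t ht => Fq_hasDeriv t (hsub ht)
      · apply ContinuousOn.intervalIntegrable
        apply ContinuousOn.div continuousOn_const (by fun_prop)
        intro t ht
        have := hsub ht
        simp only [Set.mem_Ioi] at this
        positivity
    have h2 : ∫ t in p..q, Real.pi/(1+t)
        = Real.pi * Real.log (1+q) - Real.pi * Real.log (1+p) := by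
      apply intervalIntegral.integral_eq_sub_of_hasDerivAt
      · intro t ht
        have ht0 : 0 < t := hsub ht
        have hd : HasDerivAt (fun t : ℝ => 1 + t) 1 t := by
          simpa using (hasDerivAt_id t).const_add (1:ℝ)
        have := (hd.log (by positivity)).const_mul Real.pi
        convert this using 1
        case e'_4 => rfl
        ring
      · apply ContinuousOn.intervalIntegrable
        apply ContinuousOn.div continuousOn_const (by fun_prop)
        intro t ht
        have := hsub ht
        simp only [Set.mem_Ioi] at this
        positivity
    rw [h1] at h2
    linarith
  have ht1 : Filter.Tendsto (fun p => Fq p - Real.pi * Real.log (1+p))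
      (nhdsWithin 0 (Set.Ioi 0)) (nhds 0) := by
    have hlog : Filter.Tendsto (fun p : ℝ => Real.pi * Real.log (1+p)) (nhds 0) (nhds 0) := by
      have hc : ContinuousAt (fun p : ℝ => Real.pi * Real.log (1+p)) 0 := by
        apply ContinuousAt.mul continuousAt_const
        have h1 : ContinuousAt (fun p : ℝ => 1 + p) 0 := by fun_prop
        have h2 := Real.continuousAt_log (by norm_num : (1:ℝ) + 0 ≠ 0)
        exact h2.comp h1
      have := hc.tendsto
      simpa using this
    have := Fq_tendsto.sub (hlog.mono_left nhdsWithin_le_nhds)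
    simpa using this
  have ht2 : Filter.Tendsto (fun p => Fq p - Real.pi * Real.log (1+p))
      (nhdsWithin 0 (Set.Ioi 0)) (nhds (Fq q - Real.pi * Real.log (1+q))) := by
    apply Filter.Tendsto.congr' _ tendsto_const_nhds
    filter_upwards [Ioc_mem_nhdsGT_of_mem (Set.mem_Ico.mpr ⟨le_refl (0:ℝ), hq0⟩)] with p hp
    exact (hconst p hp).symm
  have := tendsto_nhds_unique ht2 ht1
  linarith
end

section
/- For every positive odd integer r, ∫_0^{π/2} sin x / (4 + L_r²·sin² x) dx = (r/(√5·F_{2r}))·ln α, where α = (1+√5)/2. -/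
set_option maxHeartbeats 800000


open Real MeasureTheory intervalIntegral

theorem stmt17 (r : ℤ) (hr : 0 < r) (ho : Odd r) :
    ∫ x in (0 : ℝ)..(Real.pi / 2), Real.sin x / (4 + lucR r ^ 2 * Real.sin x ^ 2) =
      (r : ℝ) / (Real.sqrt 5 * fibR (2 * r)) * Real.log phi := by
  have h5 : Real.sqrt 5 ^ 2 = 5 := Real.sq_sqrt (by norm_num)
  have h5pos : (0:ℝ) < Real.sqrt 5 := Real.sqrt_pos.mpr (by norm_num)
  have hφ : (1:ℝ) < phi := by unfold phi; nlinarith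
  have hφ0 : (0:ℝ) < phi := lt_trans one_pos hφ
  have hmul : phi * psi = -1 := by unfold phi psi; nlinarith
  have hψ : psi = -phi⁻¹ := by
    field_simp
    nlinarith
  set p := phi ^ r with hpdef
  have hp1 : 1 < p := one_lt_zpow₀ hφ hr
  have hp0 : 0 < p := lt_trans one_pos hp1
  have hψr : psi ^ r = -p⁻¹ := by
    rw [hψ, Odd.neg_zpow ho, inv_zpow]
  have hq0 : 0 < p⁻¹ := inv_pos.mpr hp0
  have hq1 : p⁻¹ < 1 := by
    rw [inv_lt_one_iff₀]; right; exact hp1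
  set A := p + p⁻¹ with hA
  set C := p - p⁻¹ with hC
  have hC0 : 0 < C := by rw [hC]; linarith
  have hA0 : 0 < A := by rw [hA]; linarith
  have hCA : C < A := by rw [hA, hC]; linarith
  have hACsq : A ^ 2 - C ^ 2 = 4 := by
    rw [hA, hC]
    field_simp
    ring
  have hlucC : lucR r = C := by
    unfold lucR; rw [hψr]; rw [hC]; ring
  have hp2 : phi ^ (2 * r) = p ^ 2 := by
    rw [hpdef, mul_comm, zpow_mul, zpow_two, pow_two]
  have hψ2 : psi ^ (2 * r) = (p⁻¹) ^ 2 := by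
    rw [mul_comm, zpow_mul, hψr, zpow_two, pow_two]
    ring
  have hfib : Real.sqrt 5 * fibR (2 * r) = A * C := by
    unfold fibR
    rw [mul_div_cancel₀ _ h5pos.ne', hp2, hψ2, hA, hC]
    ring
  clear_value p A C
  set f : ℝ → ℝ := fun x =>
    (1 / (2 * A * C)) * (Real.log (A - C * Real.cos x) - Real.log (A + C * Real.cos x)) with hf
  have hderiv : ∀ x ∈ Set.uIcc (0:ℝ) (Real.pi / 2),
      HasDerivAt f (Real.sin x / (4 + lucR r ^ 2 * Real.sin x ^ 2)) x := by
    intro x _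
    have hcos1 := Real.cos_le_one x
    have hcos2 := Real.neg_one_le_cos x
    have hd1 : 0 < A - C * Real.cos x := by nlinarith
    have hd2 : 0 < A + C * Real.cos x := by nlinarith
    have h1 : HasDerivAt (fun x => A - C * Real.cos x) (C * Real.sin x) x := by
      have := ((Real.hasDerivAt_cos x).const_mul C).const_sub A
      exact this.congr_deriv (by ring)
    have h2 : HasDerivAt (fun x => A + C * Real.cos x) (-(C * Real.sin x)) x := by
      have := ((Real.hasDerivAt_cos x).const_mul C).const_add A
      exact this.congr_deriv (by ring)
    have hD := ((h1.log hd1.ne').sub (h2.log hd2.ne')).const_mul (1 / (2 * A * C))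
    refine HasDerivAt.congr_deriv hD ?_
    have hs : Real.cos x ^ 2 = 1 - Real.sin x ^ 2 := by
      nlinarith [Real.sin_sq_add_cos_sq x]
    have h4 : (4:ℝ) + lucR r ^ 2 * Real.sin x ^ 2
        = (A - C * Real.cos x) * (A + C * Real.cos x) := by
      rw [hlucC]; nlinarith
    rw [h4]
    field_simp
    ring
  have hint : IntervalIntegrable (fun x => Real.sin x / (4 + lucR r ^ 2 * Real.sin x ^ 2))
      volume 0 (Real.pi / 2) := by
    apply Continuous.intervalIntegrable
    apply Continuous.div Real.continuous_sin (by continuity)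
    intro x
    have : (0:ℝ) < 4 + lucR r ^ 2 * Real.sin x ^ 2 := by positivity
    exact this.ne'
  rw [integral_eq_sub_of_hasDerivAt hderiv hint]
  have hAmC : A - C * Real.cos 0 = 2 * p⁻¹ := by rw [Real.cos_zero, hA, hC]; ring
  have hApC : A + C * Real.cos 0 = 2 * p := by rw [Real.cos_zero, hA, hC]; ring
  have hAC0 : A * C ≠ 0 := by positivity
  rw [hf]
  simp only [Real.cos_pi_div_two, mul_zero, sub_zero, add_zero, sub_self, hAmC, hApC]
  rw [Real.log_mul two_ne_zero (by positivity), Real.log_mul two_ne_zero hp0.ne',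
    Real.log_inv, hpdef, Real.log_zpow, hfib]
  field_simp
  ring
end

section
/- For every positive integer r, ∫_0^π x·sin x / (4 + 5·F_{2r}²·sin² x) dx = (2π·r·√5/(5·F_{4r}))·ln α, where α = (1+√5)/2. -/
open Real MeasureTheory intervalIntegral

set_option maxHeartbeats 1000000 in
theorem stmt18 (r : ℤ) (hr : 0 < r) :
    ∫ x in (0 : ℝ)..Real.pi,
        x * Real.sin x / (4 + 5 * fibR (2 * r) ^ 2 * Real.sin x ^ 2) =
      2 * Real.pi * (r : ℝ) * Real.sqrt 5 / (5 * fibR (4 * r)) * Real.log phi := by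
  have h5 : (0:ℝ) < Real.sqrt 5 := Real.sqrt_pos.mpr (by norm_num)
  have hs5 : Real.sqrt 5 ^ 2 = 5 := Real.sq_sqrt (by norm_num)
  have h5lt : (1:ℝ) < Real.sqrt 5 := by nlinarith
  have hphi1 : (1:ℝ) < phi := by unfold phi; linarith
  have hphi0 : (0:ℝ) < phi := by linarith
  have hmul : phi * psi = -1 := by unfold phi psi; nlinarith
  have hpsine : psi ≠ 0 := by
    have : psi < 0 := by unfold psi; linarith
    exact ne_of_lt this
  set A : ℝ := phi ^ (2*r) with hA
  have hA1 : 1 < A := one_lt_zpow₀ hphi1 (by omega)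
  have hA0 : 0 < A := lt_trans one_pos hA1
  have hAne : A ≠ 0 := ne_of_gt hA0
  have hAinv1 : A⁻¹ < 1 := inv_lt_one_of_one_lt₀ hA1
  have hAinv0 : 0 < A⁻¹ := inv_pos.mpr hA0
  have hpsiA : psi ^ (2*r) = A⁻¹ := by
    have h1 : (phi * psi) ^ (2*r) = 1 := by
      rw [hmul, zpow_mul]; norm_num
    rw [mul_zpow] at h1
    field_simp
    linarith [h1]
  set b : ℝ := A - A⁻¹ with hbdef
  set a : ℝ := A + A⁻¹ with hadef
  have hb0 : 0 < b := by rw [hbdef]; linarith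
  have ha0 : 0 < a := by rw [hadef]; linarith
  have hba : b < a := by rw [hbdef, hadef]; linarith
  have ha2 : a^2 = b^2 + 4 := by
    rw [hadef, hbdef]; field_simp; ring
  have hFb : Real.sqrt 5 * fibR (2*r) = b := by
    unfold fibR
    rw [hpsiA, ← hA, mul_comm, div_mul_cancel₀ _ (ne_of_gt h5)]
  have h5F : 5 * fibR (2*r)^2 = b^2 := by
    nlinarith [hFb, hs5]
  have hphi4 : phi ^ (4*r) = A^2 := by
    rw [hA, show (4*r) = (2*r) + (2*r) by ring, zpow_add₀ (ne_of_gt hphi0)]; ring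
  have hpsi4 : psi ^ (4*r) = (A⁻¹)^2 := by
    rw [show (4*r) = (2*r) + (2*r) by ring, zpow_add₀ hpsine, hpsiA]; ring
  have hab' : A^2 - (A⁻¹)^2 = a * b := by rw [hadef, hbdef]; ring
  have hF4 : Real.sqrt 5 * fibR (4*r) = a * b := by
    unfold fibR
    rw [hphi4, hpsi4, mul_comm, div_mul_cancel₀ _ (ne_of_gt h5), hab']
  have hden : ∀ x : ℝ, (0:ℝ) < 4 + b^2 * Real.sin x^2 := by
    intro x; positivity
  -- rewrite integrand
  simp only [h5F]
  set I := ∫ x in (0:ℝ)..Real.pi, x * Real.sin x / (4 + b^2 * Real.sin x^2) with hI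
  set J := ∫ x in (0:ℝ)..Real.pi, Real.sin x / (4 + b^2 * Real.sin x^2) with hJ
  have hcontJ : Continuous fun x => Real.sin x / (4 + b^2 * Real.sin x^2) := by
    apply Continuous.div Real.continuous_sin (by continuity)
    intro x; exact ne_of_gt (hden x)
  have hcontI : Continuous fun x => x * Real.sin x / (4 + b^2 * Real.sin x^2) := by
    apply Continuous.div (by continuity) (by continuity)
    intro x; exact ne_of_gt (hden x)
  -- Step 1: symmetry
  have hsymm : (∫ x in (0:ℝ)..Real.pi, (Real.pi - x) * Real.sin x / (4 + b^2 * Real.sin x^2)) = I := by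
    have h := intervalIntegral.integral_comp_sub_left (a := 0) (b := Real.pi)
      (fun x => x * Real.sin x / (4 + b^2 * Real.sin x^2)) Real.pi
    simp only [sub_self, sub_zero, Real.sin_pi_sub] at h
    exact h
  have hsplit : (∫ x in (0:ℝ)..Real.pi, (Real.pi - x) * Real.sin x / (4 + b^2 * Real.sin x^2))
      = Real.pi * J - I := by
    have heq : ∀ x : ℝ, (Real.pi - x) * Real.sin x / (4 + b^2 * Real.sin x^2)
        = Real.pi * (Real.sin x / (4 + b^2 * Real.sin x^2))
          - x * Real.sin x / (4 + b^2 * Real.sin x^2) := by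
      intro x; ring
    simp only [heq]
    rw [intervalIntegral.integral_sub
      ((hcontJ.intervalIntegrable _ _).const_mul Real.pi)
      (hcontI.intervalIntegrable _ _),
      intervalIntegral.integral_const_mul]
  have hIJ : I = Real.pi * J / 2 := by
    rw [hsplit] at hsymm; linarith
  -- Step 2: antiderivative for J
  have hpos1 : ∀ x : ℝ, 0 < a - b * Real.cos x := by
    intro x
    nlinarith [Real.neg_one_le_cos x, Real.cos_le_one x]
  have hpos2 : ∀ x : ℝ, 0 < a + b * Real.cos x := by
    intro x
    nlinarith [Real.neg_one_le_cos x, Real.cos_le_one x]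
  set g : ℝ → ℝ := fun x =>
    (Real.log (a - b * Real.cos x) - Real.log (a + b * Real.cos x)) / (2 * a * b) with hg
  have hderiv : ∀ x ∈ Set.uIcc (0:ℝ) Real.pi,
      HasDerivAt g (Real.sin x / (4 + b^2 * Real.sin x^2)) x := by
    intro x _
    have h1 : HasDerivAt (fun y => a - b * Real.cos y) (b * Real.sin x) x := by
      have := ((Real.hasDerivAt_cos x).const_mul b).const_sub a
      exact this.congr_deriv (by ring)
    have h2 : HasDerivAt (fun y => a + b * Real.cos y) (-(b * Real.sin x)) x := by
      have := ((Real.hasDerivAt_cos x).const_mul b).const_add a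
      exact this.congr_deriv (by ring)
    have h3 := ((h1.log (ne_of_gt (hpos1 x))).sub (h2.log (ne_of_gt (hpos2 x)))).div_const
      (2 * a * b)
    refine (h3.congr_deriv ?_)
    symm
    have hpy : Real.sin x ^ 2 + Real.cos x ^ 2 = 1 := Real.sin_sq_add_cos_sq x
    have e1 : a - b * Real.cos x ≠ 0 := ne_of_gt (hpos1 x)
    have e2 : a + b * Real.cos x ≠ 0 := ne_of_gt (hpos2 x)
    have e3 : (4:ℝ) + b^2 * Real.sin x ^ 2 ≠ 0 := ne_of_gt (hden x)
    field_simp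
    linear_combination (2*a*Real.sin x) * ha2 - (2*a*b^2*Real.sin x) * hpy
  have hJval : J = g Real.pi - g 0 :=
    intervalIntegral.integral_eq_sub_of_hasDerivAt hderiv (hcontJ.intervalIntegrable _ _)
  have hgpi : g Real.pi = (Real.log (a + b) - Real.log (a - b)) / (2 * a * b) := by
    rw [hg]; simp [Real.cos_pi]; ring_nf
  have hg0 : g 0 = (Real.log (a - b) - Real.log (a + b)) / (2 * a * b) := by
    rw [hg]; simp [Real.cos_zero]
  have hab1 : a + b = 2 * A := by rw [hadef, hbdef]; ring
  have hab2 : a - b = 2 * A⁻¹ := by rw [hadef, hbdef]; ring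
  have hlogA : Real.log A = (2*r : ℝ) * Real.log phi := by
    rw [hA, Real.log_zpow]; push_cast; ring
  have hlogdiff : Real.log (a + b) - Real.log (a - b) = 2 * Real.log A := by
    rw [hab1, hab2, Real.log_mul two_ne_zero hAne,
      Real.log_mul two_ne_zero (inv_ne_zero hAne), Real.log_inv]
    ring
  have habne : a * b ≠ 0 := ne_of_gt (mul_pos ha0 hb0)
  have hJfinal : J = 4 * (r : ℝ) * Real.log phi / (a * b) := by
    rw [hJval, hgpi, hg0]
    rw [div_sub_div_same]
    rw [show Real.log (a + b) - Real.log (a - b) - (Real.log (a - b) - Real.log (a + b))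
      = 2 * (Real.log (a + b) - Real.log (a - b)) by ring, hlogdiff, hlogA]
    field_simp
    ring
  rw [hIJ, hJfinal]
  have hfib4 : fibR (4*r) = a * b / Real.sqrt 5 := by
    rw [← hF4]; field_simp
  rw [hfib4]
  have h5ne : Real.sqrt 5 ≠ 0 := ne_of_gt h5
  field_simp
  linear_combination (-4*Real.log phi) * hs5
end
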